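/- Suppose Q ∈ ℝ^Z satisfies the average-reward Bellman equation Q = r − J·1 + P Q with J = π^⊤ r, suppose π^⊤ Q = 0, and suppose there is ε ≥ 0 such that |Q(z) − Q(z')| ≤ ε whenever m(z) = m(z'). Let Q̃* be the unique fixed point in Ξ̃ of the projected Bellman operator g. Then ‖ Φ̃ Q̃* − Q ‖_D ≤ ε / (1 − μ_D). (With ε = c·ρ^{κ+1} from the exponential decay property, this yields Theorem 3(a): there exist Q̂ ∈ ℝ^{W∖{w₀}} and a constant c₀ ∈ ℝ with √( E_{z∼π} |Q̂(m(z)) + c₀ − Q(z)|² ) ≤ c·ρ^{κ+1}/(1 − μ_D), interpreting Q̂ as 0 at w₀.) -/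

import Mathlib

open Finset Matrix

/-- The weighted Euclidean norm `‖x‖_D = √(xᵀ D x)` with `D = diag(π)`. -/
noncomputable def Dnorm {Z : Type*} [Fintype Z] (π : Z → ℝ) (x : Z → ℝ) : ℝ :=
  Real.sqrt (∑ z, π z * x z ^ 2)

/-- The full feature matrix `Φ̃ ∈ ℝ^{Z×W}`: `Φ̃(z,w) = 1` if `m z = w`, else `0`. -/
noncomputable def PhiTilde {Z W : Type*} [Fintype Z] [Fintype W] [DecidableEq W]
    (m : Z → W) : Matrix Z W ℝ :=
  Matrix.of fun z w => if m z = w then 1 else 0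

/-- The marginal probability `v(w) = ∑_{z : m z = w} π z` (the diagonal of
`D̃ = Φ̃ᵀ D Φ̃`). -/
noncomputable def vmarg {Z W : Type*} [Fintype Z] [Fintype W] [DecidableEq W]
    (m : Z → W) (π : Z → ℝ) (w : W) : ℝ :=
  ∑ z ∈ Finset.univ.filter (fun z => m z = w), π z

/-- The projection matrix `Π = D̃⁻¹ Φ̃ᵀ D`: its row indexed by `w` is the conditional
distribution of `z` given `m z = w` under `π`. -/
noncomputable def PiProj {Z W : Type*} [Fintype Z] [Fintype W] [DecidableEq W]
    (m : Z → W) (π : Z → ℝ) : Matrix W Z ℝ :=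
  Matrix.of fun w z => if m z = w then π z / vmarg m π w else 0

/-- The norm `‖Q̃‖_{D̃} = √(Q̃ᵀ D̃ Q̃)` on `ℝ^W`. -/
noncomputable def DtildeNorm {Z W : Type*} [Fintype Z] [Fintype W] [DecidableEq W]
    (m : Z → W) (π : Z → ℝ) (Qt : W → ℝ) : ℝ :=
  Real.sqrt (∑ w, vmarg m π w * Qt w ^ 2)

/-- The average-reward Bellman operator `TD(Q) = r − (πᵀr)·1 + PQ`. -/
noncomputable def TDop {Z : Type*} [Fintype Z]
    (P : Matrix Z Z ℝ) (π r : Z → ℝ) (Q : Z → ℝ) : Z → ℝ :=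
  fun z => r z - (∑ z', π z' * r z') + P.mulVec Q z

/-- The projected Bellman operator `g(Q̃) = Π TD(Φ̃ Q̃)`. -/
noncomputable def gOp {Z W : Type*} [Fintype Z] [Fintype W] [DecidableEq W]
    (P : Matrix Z Z ℝ) (π r : Z → ℝ) (m : Z → W) (Qt : W → ℝ) : W → ℝ :=
  (PiProj m π).mulVec (TDop P π r ((PhiTilde m).mulVec Qt))

/-- The mean-zero subspace `Ξ̃ = {Q̃ : πᵀΦ̃Q̃ = 0}`. -/
def XiTilde {Z W : Type*} [Fintype Z] [Fintype W] [DecidableEq W]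
    (π : Z → ℝ) (m : Z → W) : Set (W → ℝ) :=
  {Qt | ∑ z, π z * ((PhiTilde m).mulVec Qt) z = 0}

section Aux
variable {Z W : Type*} [Fintype Z] [Fintype W] [DecidableEq W]

lemma PhiTilde_mulVec (m : Z → W) (Qt : W → ℝ) (z : Z) :
    (PhiTilde m).mulVec Qt z = Qt (m z) := by
  simp [PhiTilde, Matrix.mulVec, dotProduct, ite_mul]

lemma PiProj_mulVec (m : Z → W) (π : Z → ℝ) (y : Z → ℝ) (w : W) :
    (PiProj m π).mulVec y w
      = (∑ z ∈ Finset.univ.filter (fun z => m z = w), π z * y z) / vmarg m π w := by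
  simp only [Matrix.mulVec, dotProduct, PiProj, Matrix.of_apply, ite_mul, zero_mul]
  rw [Finset.sum_div, ← Finset.sum_filter]
  exact Finset.sum_congr rfl fun z _ => by ring

lemma vmarg_pos (m : Z → W) (hm : Function.Surjective m) (π : Z → ℝ) {σ : ℝ} (hσ : 0 < σ)
    (hπσ : ∀ z, σ ≤ π z) (w : W) : 0 < vmarg m π w := by
  obtain ⟨z, hz⟩ := hm w
  refine Finset.sum_pos' (fun i _ => (hσ.trans_le (hπσ i)).le) ⟨z, ?_, hσ.trans_le (hπσ z)⟩
  simp [hz]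

lemma Dnorm_nonneg {Z : Type*} [Fintype Z] (π x : Z → ℝ) : 0 ≤ Dnorm π x :=
  Real.sqrt_nonneg _

lemma Dnorm_sq {Z : Type*} [Fintype Z] (π : Z → ℝ) (hπ : ∀ z, 0 ≤ π z) (x : Z → ℝ) :
    Dnorm π x ^ 2 = ∑ z, π z * x z ^ 2 := by
  rw [Dnorm, Real.sq_sqrt]
  exact Finset.sum_nonneg fun z _ => mul_nonneg (hπ z) (sq_nonneg _)

lemma Dnorm_CS {Z : Type*} [Fintype Z] (π : Z → ℝ) (hπ : ∀ z, 0 ≤ π z) (a b : Z → ℝ) :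
    ∑ z, π z * (a z * b z) ≤ Dnorm π a * Dnorm π b := by
  have hCS := Finset.sum_mul_sq_le_sq_mul_sq Finset.univ
    (fun z => Real.sqrt (π z) * a z) (fun z => Real.sqrt (π z) * b z)
  have h1 : ∀ z : Z, (Real.sqrt (π z) * a z) * (Real.sqrt (π z) * b z) = π z * (a z * b z) := by
    intro z
    have h := Real.mul_self_sqrt (hπ z)
    linear_combination (a z * b z) * h
  have h2 : ∀ z : Z, (Real.sqrt (π z) * a z) ^ 2 = π z * a z ^ 2 := fun z => by
    rw [mul_pow, Real.sq_sqrt (hπ z)]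
  have h3 : ∀ z : Z, (Real.sqrt (π z) * b z) ^ 2 = π z * b z ^ 2 := fun z => by
    rw [mul_pow, Real.sq_sqrt (hπ z)]
  simp only [h1, h2, h3] at hCS
  calc ∑ z, π z * (a z * b z) ≤ |∑ z, π z * (a z * b z)| := le_abs_self _
    _ = Real.sqrt ((∑ z, π z * (a z * b z)) ^ 2) := (Real.sqrt_sq_eq_abs _).symm
    _ ≤ Real.sqrt ((∑ z, π z * a z ^ 2) * ∑ z, π z * b z ^ 2) := Real.sqrt_le_sqrt hCS
    _ = Dnorm π a * Dnorm π b := by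
        rw [Real.sqrt_mul (Finset.sum_nonneg fun z _ => mul_nonneg (hπ z) (sq_nonneg _))]
        rfl

lemma Dnorm_add_le {Z : Type*} [Fintype Z] (π : Z → ℝ) (hπ : ∀ z, 0 ≤ π z) (a b : Z → ℝ) :
    Dnorm π (a + b) ≤ Dnorm π a + Dnorm π b := by
  have hA := Dnorm_nonneg π a
  have hB := Dnorm_nonneg π b
  have hexp : ∑ z, π z * (a + b) z ^ 2
      = (∑ z, π z * a z ^ 2) + 2 * (∑ z, π z * (a z * b z)) + ∑ z, π z * b z ^ 2 := by
    rw [Finset.mul_sum, ← Finset.sum_add_distrib, ← Finset.sum_add_distrib]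
    exact Finset.sum_congr rfl fun z _ => by simp only [Pi.add_apply]; ring
  have hle : ∑ z, π z * (a + b) z ^ 2 ≤ (Dnorm π a + Dnorm π b) ^ 2 := by
    rw [hexp]
    have := Dnorm_CS π hπ a b
    have ha2 := Dnorm_sq π hπ a
    have hb2 := Dnorm_sq π hπ b
    nlinarith
  calc Dnorm π (a + b) = Real.sqrt (∑ z, π z * (a + b) z ^ 2) := rfl
    _ ≤ Real.sqrt ((Dnorm π a + Dnorm π b) ^ 2) := Real.sqrt_le_sqrt hle
    _ = Dnorm π a + Dnorm π b := by rw [Real.sqrt_sq (by linarith)]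

lemma E_nonexpansive (m : Z → W) (π : Z → ℝ) (hπ : ∀ z, 0 ≤ π z)
    (hv : ∀ w, 0 < vmarg m π w) (y : Z → ℝ) :
    Dnorm π (fun z => (PiProj m π).mulVec y (m z)) ≤ Dnorm π y := by
  unfold Dnorm
  apply Real.sqrt_le_sqrt
  rw [← Finset.sum_fiberwise Finset.univ m (fun z => π z * y z ^ 2),
      ← Finset.sum_fiberwise Finset.univ m (fun z => π z * ((PiProj m π).mulVec y (m z)) ^ 2)]
  refine Finset.sum_le_sum fun w _ => ?_
  have hcongr : ∑ z ∈ Finset.univ.filter (fun z => m z = w),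
      π z * ((PiProj m π).mulVec y (m z)) ^ 2
      = (∑ z ∈ Finset.univ.filter (fun z => m z = w), π z) * ((PiProj m π).mulVec y w) ^ 2 := by
    rw [Finset.sum_mul]
    refine Finset.sum_congr rfl fun z hz => ?_
    rw [(Finset.mem_filter.1 hz).2]
  rw [hcongr, PiProj_mulVec]
  set v := vmarg m π w with hvdef
  set S := ∑ z ∈ Finset.univ.filter (fun z => m z = w), π z * y z with hS
  have hvv : (∑ z ∈ Finset.univ.filter (fun z => m z = w), π z) = v := rfl
  rw [hvv, div_pow]
  have hCS : S ^ 2 ≤ v * ∑ z ∈ Finset.univ.filter (fun z => m z = w), π z * y z ^ 2 := by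
    have := Finset.sum_mul_sq_le_sq_mul_sq (Finset.univ.filter (fun z => m z = w))
      (fun z => Real.sqrt (π z)) (fun z => Real.sqrt (π z) * y z)
    have h1 : ∀ z, Real.sqrt (π z) * (Real.sqrt (π z) * y z) = π z * y z := fun z => by
      rw [← mul_assoc, Real.mul_self_sqrt (hπ z)]
    have h2 : ∀ z, Real.sqrt (π z) ^ 2 = π z := fun z => Real.sq_sqrt (hπ z)
    have h3 : ∀ z, (Real.sqrt (π z) * y z) ^ 2 = π z * y z ^ 2 := fun z => by
      rw [mul_pow, h2]
    simp only [h1, h2, h3] at this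
    exact this
  have hvpos := hv w
  calc v * (S ^ 2 / v ^ 2) = S ^ 2 / v := by field_simp
    _ ≤ _ := by
        rw [div_le_iff₀ hvpos]
        calc S ^ 2 ≤ v * ∑ z ∈ Finset.univ.filter (fun z => m z = w), π z * y z ^ 2 := hCS
          _ = _ := by ring

end Aux

/-- **Lemma 10 / Theorem 3(a): approximation quality of the projected fixed point.**
If `Q` solves the average-reward Bellman equation `Q = r − J·1 + PQ` with `πᵀQ = 0`,
and `Q` varies by at most `ε` on each fiber of `m`, then the unique mean-zero fixed
point `Q̃*` of the projected Bellman operator satisfies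
`‖Φ̃Q̃* − Q‖_D ≤ ε/(1−μ_D)`. -/
theorem projected_fixed_point_approximation
    {Z W : Type*} [Fintype Z] [Nonempty Z] [DecidableEq Z]
    [Fintype W] [DecidableEq W]
    (P : Matrix Z Z ℝ) (π : Z → ℝ) (σ μD : ℝ)
    (hPnonneg : ∀ z z', 0 ≤ P z z')
    (hProw : ∀ z, ∑ z', P z z' = 1)
    (hσ : 0 < σ) (hπσ : ∀ z, σ ≤ π z) (hπ1 : ∑ z, π z = 1)
    (hstat : ∀ z', ∑ z, π z * P z z' = π z')
    (hμD : μD ∈ Set.Ioo (0 : ℝ) 1)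
    (hcontr : ∀ x : Z → ℝ,
      Dnorm π ((P - Matrix.of fun _ z' => π z').mulVec x) ≤ μD * Dnorm π x)
    (m : Z → W) (hm : Function.Surjective m)
    (r : Z → ℝ)
    (Q : Z → ℝ)
    (hBellman : ∀ z, Q z = r z - (∑ z', π z' * r z') + P.mulVec Q z)
    (hmean : ∑ z, π z * Q z = 0)
    (ε : ℝ) (hε : 0 ≤ ε)
    (hfiber : ∀ z z', m z = m z' → |Q z - Q z'| ≤ ε)
    (Qstar : W → ℝ)
    (hQstarXi : Qstar ∈ XiTilde π m)
    (hQstarFix : gOp P π r m Qstar = Qstar) :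
    Dnorm π ((PhiTilde m).mulVec Qstar - Q) ≤ ε / (1 - μD) := by
  classical
  have hπ : ∀ z, 0 ≤ π z := fun z => (hσ.trans_le (hπσ z)).le
  have hv : ∀ w, 0 < vmarg m π w := vmarg_pos m hm π hσ hπσ
  set x := (PhiTilde m).mulVec Qstar with hx
  -- TD(x) = Q + P(x - Q)
  have hTDx : TDop P π r x = Q + P.mulVec (x - Q) := by
    funext z
    simp only [TDop, Pi.add_apply, Pi.sub_apply]
    have h1 : P.mulVec (x - Q) z = P.mulVec x z - P.mulVec Q z := by
      rw [Matrix.mulVec_sub, Pi.sub_apply]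
    have h2 := hBellman z
    rw [h1]; linarith
  -- fixed point equation applied through Φ̃
  have hfix : ∀ z, x z = (PiProj m π).mulVec (TDop P π r x) (m z) := by
    intro z
    have h := congrFun hQstarFix (m z)
    simp only [gOp] at h
    rw [hx, PhiTilde_mulVec]
    exact h.symm
  -- decomposition d = E(Pd) + (EQ - Q)
  have hdecomp : x - Q = (fun z => (PiProj m π).mulVec (P.mulVec (x - Q)) (m z))
      + (fun z => (PiProj m π).mulVec Q (m z) - Q z) := by
    funext z
    simp only [Pi.add_apply, Pi.sub_apply]
    have h := hfix z
    rw [hTDx, Matrix.mulVec_add] at h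
    simp only [Pi.add_apply] at h
    linarith
  -- the difference has mean zero
  have hzero : ∀ z₀ : Z, (Matrix.of fun _ z' => π z').mulVec (x - Q) z₀ = 0 := by
    intro z₀
    have hxz : ∑ z', π z' * x z' = 0 := hQstarXi
    have hsum : ∑ z', π z' * (x z' - Q z') = 0 := by
      have : ∑ z', π z' * (x z' - Q z') = (∑ z', π z' * x z') - ∑ z', π z' * Q z' := by
        rw [← Finset.sum_sub_distrib]
        exact Finset.sum_congr rfl fun z' _ => by ring
      rw [this, hxz, hmean, sub_zero]
    simpa [Matrix.mulVec, dotProduct, Pi.sub_apply] using hsum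
  -- contraction bound on P(x - Q)
  have hPd : Dnorm π (P.mulVec (x - Q)) ≤ μD * Dnorm π (x - Q) := by
    have heq : P.mulVec (x - Q) = (P - Matrix.of fun _ z' => π z').mulVec (x - Q) := by
      funext z₀
      rw [Matrix.sub_mulVec, Pi.sub_apply, hzero z₀, sub_zero]
    rw [heq]
    exact hcontr (x - Q)
  -- projection is nonexpansive
  have hE1 : Dnorm π (fun z => (PiProj m π).mulVec (P.mulVec (x - Q)) (m z))
      ≤ Dnorm π (P.mulVec (x - Q)) := E_nonexpansive m π hπ hv _
  -- pointwise bound on EQ - Q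
  have hpt : ∀ z, |(PiProj m π).mulVec Q (m z) - Q z| ≤ ε := by
    intro z
    rw [PiProj_mulVec]
    set s := Finset.univ.filter (fun z' => m z' = m z) with hs
    have hvz := hv (m z)
    have hnum : (∑ z' ∈ s, π z' * Q z') - vmarg m π (m z) * Q z
        = ∑ z' ∈ s, π z' * (Q z' - Q z) := by
      rw [vmarg, Finset.sum_mul, ← Finset.sum_sub_distrib]
      exact Finset.sum_congr rfl fun z' _ => by ring
    have heq : (∑ z' ∈ s, π z' * Q z') / vmarg m π (m z) - Q z
        = (∑ z' ∈ s, π z' * (Q z' - Q z)) / vmarg m π (m z) := by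
      rw [← hnum]
      field_simp
    rw [heq, abs_div, abs_of_pos hvz, div_le_iff₀ hvz]
    calc |∑ z' ∈ s, π z' * (Q z' - Q z)| ≤ ∑ z' ∈ s, |π z' * (Q z' - Q z)| :=
          Finset.abs_sum_le_sum_abs _ _
      _ ≤ ∑ z' ∈ s, π z' * ε := by
          refine Finset.sum_le_sum fun z' hz' => ?_
          rw [abs_mul, abs_of_nonneg (hπ z')]
          exact mul_le_mul_of_nonneg_left
            (hfiber z' z (Finset.mem_filter.1 hz').2) (hπ z')
      _ = ε * vmarg m π (m z) := by rw [← Finset.sum_mul, vmarg]; ring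
  -- D-norm bound on EQ - Q
  have hE2 : Dnorm π (fun z => (PiProj m π).mulVec Q (m z) - Q z) ≤ ε := by
    unfold Dnorm
    have hle : ∑ z, π z * ((PiProj m π).mulVec Q (m z) - Q z) ^ 2 ≤ ∑ z, π z * ε ^ 2 := by
      refine Finset.sum_le_sum fun z _ => mul_le_mul_of_nonneg_left ?_ (hπ z)
      have h := hpt z
      have h' := abs_le.1 h
      nlinarith [h'.1, h'.2]
    calc Real.sqrt (∑ z, π z * ((PiProj m π).mulVec Q (m z) - Q z) ^ 2)
        ≤ Real.sqrt (∑ z, π z * ε ^ 2) := Real.sqrt_le_sqrt hle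
      _ = ε := by rw [← Finset.sum_mul, hπ1, one_mul, Real.sqrt_sq hε]
  -- combine
  set N := Dnorm π (x - Q) with hN
  have hNnn : 0 ≤ N := Dnorm_nonneg π _
  have htri : N ≤ μD * N + ε := by
    calc N = Dnorm π ((fun z => (PiProj m π).mulVec (P.mulVec (x - Q)) (m z))
            + (fun z => (PiProj m π).mulVec Q (m z) - Q z)) := congrArg (Dnorm π) hdecomp
      _ ≤ Dnorm π (fun z => (PiProj m π).mulVec (P.mulVec (x - Q)) (m z))
            + Dnorm π (fun z => (PiProj m π).mulVec Q (m z) - Q z) := Dnorm_add_le π hπ _ _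
      _ ≤ μD * N + ε := add_le_add (hE1.trans hPd) hE2
  have hμ1 : 0 < 1 - μD := by have := hμD.2; linarith
  rw [le_div_iff₀ hμ1]
  linarith
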